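/- arXiv:1110.4227 — 5 statements merged into one kernel-verified Lean document; each statement's English description precedes it below -/
import Mathlib

section
/- Let x0 ∈ ℝ, y0 > 0, and let q ∈ ℍ be such that |(q − x0)² + y0²| = r² for some r ≥ 0. Then for every I ∈ 𝕊, setting q0 = x0 + I·y0, one has √(r² + y0²) − y0 ≤ |q − q0| ≤ √(r² + y0²) + y0. -/
/-!
Write `p = q - x0 = a + v` with `a` real and `v` imaginary, `s = |v|`. For the imaginary unit
`J = v / s` the quaternion `p` commutes with `J`, so `p² + y0² = (p - y0 J)(p + y0 J)` and
`r² = m M` with `m = √(a² + (s - y0)²)` and `M = √(a² + (s + y0)²)`. By the triangle inequality on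
imaginary parts, `d = |p - y0 I|` lies between `m` and `M`, and `M ≤ m + 2 y0`. Hence
`d² - 2 y0 d ≤ m M ≤ d² + 2 y0 d`, i.e. `(d - y0)² ≤ r² + y0² ≤ (d + y0)²`.
-/

open Quaternion

namespace Quaternion

theorem normSq_eq_re_sq_add_normSq_im {R : Type*} [CommRing R] (p : ℍ[R]) :
    normSq p = p.re ^ 2 + normSq p.im := by
  simp only [normSq_def', re_im, imI_im, imJ_im, imK_im]
  ring

theorem normSq_sq_add_coe_sq {R : Type*} [CommRing R] (p : ℍ[R]) (c : R) :
    normSq (p ^ 2 + ((c ^ 2 : R) : ℍ[R])) =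
      (p.re ^ 2 + normSq p.im + c ^ 2) ^ 2 - 4 * c ^ 2 * normSq p.im := by
  simp only [normSq_def', sq, re_add, imI_add, imJ_add, imK_add, re_mul, imI_mul, imJ_mul,
    imK_mul, re_coe, imI_coe, imJ_coe, imK_coe, re_im, imI_im, imJ_im, imK_im]
  ring

theorem norm_sq_eq_normSq (p : ℍ[ℝ]) : ‖p‖ ^ 2 = normSq p := by
  rw [normSq_eq_norm_mul_self, sq]

theorem norm_sq_eq_re_sq_add_norm_im_sq (p : ℍ[ℝ]) : ‖p‖ ^ 2 = p.re ^ 2 + ‖p.im‖ ^ 2 := by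
  rw [norm_sq_eq_normSq, norm_sq_eq_normSq, normSq_eq_re_sq_add_normSq_im]

theorem norm_eq_one_of_sq_eq_neg_one {I : ℍ[ℝ]} (hI : I ^ 2 = -1) : ‖I‖ = 1 := by
  have h : ‖I‖ ^ 2 = 1 := by rw [← norm_pow, hI, norm_neg, norm_one]
  exact (pow_eq_one_iff_of_nonneg (norm_nonneg I) two_ne_zero).1 h

theorem re_eq_zero_of_sq_eq_neg_one {I : ℍ[ℝ]} (hI : I ^ 2 = -1) : I.re = 0 := by
  have hre : I.re ^ 2 - I.imI ^ 2 - I.imJ ^ 2 - I.imK ^ 2 = -1 := by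
    simpa [sq] using congrArg QuaternionAlgebra.re hI
  have hnorm : I.re ^ 2 + I.imI ^ 2 + I.imJ ^ 2 + I.imK ^ 2 = 1 := by
    rw [← normSq_def', ← norm_sq_eq_normSq, norm_eq_one_of_sq_eq_neg_one hI, one_pow]
  exact (pow_eq_zero_iff two_ne_zero).1 (by linarith)

theorem norm_sq_add_coe_sq_eq_sqrt_mul_sqrt (p : ℍ[ℝ]) (c : ℝ) :
    ‖p ^ 2 + ((c ^ 2 : ℝ) : ℍ[ℝ])‖ =
      √(p.re ^ 2 + (‖p.im‖ - c) ^ 2) * √(p.re ^ 2 + (‖p.im‖ + c) ^ 2) := by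
  rw [← Real.sqrt_mul (by positivity), ← Real.sqrt_sq (norm_nonneg _), norm_sq_eq_normSq,
    normSq_sq_add_coe_sq, ← norm_sq_eq_normSq]
  ring_nf

theorem sqrt_le_norm_sub_le_sqrt (p u : ℍ[ℝ]) (hu : u.re = 0) :
    √(p.re ^ 2 + (‖p.im‖ - ‖u‖) ^ 2) ≤ ‖p - u‖ ∧
      ‖p - u‖ ≤ √(p.re ^ 2 + (‖p.im‖ + ‖u‖) ^ 2) := by
  have hu_im : u.im = u := by ext <;> simp [hu]
  have hdist : ‖p - u‖ = √(p.re ^ 2 + ‖p.im - u‖ ^ 2) := by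
    rw [← Real.sqrt_sq (norm_nonneg (p - u)), norm_sq_eq_re_sq_add_norm_im_sq, re_sub, im_sub,
      hu, hu_im, sub_zero]
  have hlow : (‖p.im‖ - ‖u‖) ^ 2 ≤ ‖p.im - u‖ ^ 2 :=
    sq_le_sq.2 <| (abs_norm_sub_norm_le p.im u).trans_eq (abs_norm _).symm
  rw [hdist]
  constructor <;> gcongr
  exact norm_sub_le _ _

end Quaternion

theorem sqrt_sq_add_add_sq_le (a s c : ℝ) (hc : 0 ≤ c) :
    √(a ^ 2 + (s + c) ^ 2) ≤ √(a ^ 2 + (s - c) ^ 2) + 2 * c := by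
  have hm : s - c ≤ √(a ^ 2 + (s - c) ^ 2) := Real.le_sqrt_of_sq_le (by nlinarith)
  rw [Real.sqrt_le_left (by positivity), add_sq (√_), Real.sq_sqrt (by positivity)]
  nlinarith

theorem mul_add_sq_mem_Icc {R : Type*} [CommRing R] [LinearOrder R] [IsStrictOrderedRing R]
    {m d M c : R} (hm : 0 ≤ m) (hmd : m ≤ d) (hdM : d ≤ M) (hMm : M ≤ m + 2 * c) :
    m * M + c ^ 2 ∈ Set.Icc ((d - c) ^ 2) ((d + c) ^ 2) := by
  constructor
  · rcases le_total d (2 * c) with h | h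
    · nlinarith
    · nlinarith [mul_le_mul (by linarith : d - 2 * c ≤ m) hdM (by linarith) hm]
  · nlinarith [mul_le_mul hmd (by linarith : M ≤ d + 2 * c) (by linarith) (by linarith)]

theorem abs_sqrt_sub_le_of_mem_Icc {x d c : ℝ} (hdc : 0 ≤ d + c)
    (hx : x ∈ Set.Icc ((d - c) ^ 2) ((d + c) ^ 2)) : |√x - d| ≤ c := by
  have hlow : d - c ≤ √x := Real.le_sqrt_of_sq_le hx.1
  have hup : √x ≤ d + c := (Real.sqrt_le_left hdc).2 hx.2
  rw [abs_sub_le_iff]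
  constructor <;> linarith

theorem norm_sub_center_bounds_general (x0 y0 : ℝ) (hy0 : 0 < y0) (q : ℍ[ℝ]) (r : ℝ)
    (hq : ‖(q - (x0 : ℍ[ℝ])) ^ 2 + ((y0 ^ 2 : ℝ) : ℍ[ℝ])‖ = r ^ 2)
    (I : ℍ[ℝ]) (hI : I ^ 2 = -1) (q0 : ℍ[ℝ]) (hq0 : q0 = (x0 : ℍ[ℝ]) + y0 • I) :
    Real.sqrt (r ^ 2 + y0 ^ 2) - y0 ≤ ‖q - q0‖ ∧
      ‖q - q0‖ ≤ Real.sqrt (r ^ 2 + y0 ^ 2) + y0 := by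
  set p := q - (x0 : ℍ[ℝ])
  have hq_sub : q - q0 = p - y0 • I := by rw [hq0, sub_add_eq_sub_sub]
  have hu_re : (y0 • I).re = 0 := by simp [re_eq_zero_of_sq_eq_neg_one hI]
  have hu_norm : ‖y0 • I‖ = y0 := by
    rw [norm_smul, norm_eq_one_of_sq_eq_neg_one hI, mul_one, Real.norm_of_nonneg hy0.le]
  obtain ⟨hm, hM⟩ := sqrt_le_norm_sub_le_sqrt p (y0 • I) hu_re
  rw [hu_norm] at hm hM
  rw [norm_sq_add_coe_sq_eq_sqrt_mul_sqrt] at hq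
  have hdist := abs_sqrt_sub_le_of_mem_Icc (by positivity)
    (mul_add_sq_mem_Icc (Real.sqrt_nonneg _) hm hM (sqrt_sq_add_add_sq_le _ _ _ hy0.le))
  rw [hq, ← hq_sub] at hdist
  constructor <;> linarith [abs_sub_le_iff.1 hdist]

theorem norm_sub_center_bounds (x0 y0 : ℝ) (hy0 : 0 < y0) (q : ℍ[ℝ]) (r : ℝ)
    (hr : 0 ≤ r) (hq : ‖(q - (x0 : ℍ[ℝ])) ^ 2 + ((y0 ^ 2 : ℝ) : ℍ[ℝ])‖ = r ^ 2)
    (I : ℍ[ℝ]) (hI : I ^ 2 = -1) (q0 : ℍ[ℝ]) (hq0 : q0 = (x0 : ℍ[ℝ]) + y0 • I) :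
    Real.sqrt (r ^ 2 + y0 ^ 2) - y0 ≤ ‖q - q0‖ ∧
      ‖q - q0‖ ≤ Real.sqrt (r ^ 2 + y0 ^ 2) + y0 :=
  norm_sub_center_bounds_general x0 y0 hy0 q r hq I hI q0 hq0
end

section
/- Let x0 ∈ ℝ, y0 > 0, q ∈ ℍ with q ∉ x0 + y0·𝕊 (so q − q0 ≠ 0 for q0 = x0 + I y0, I ∈ 𝕊). Then |(q − x0)² + y0²| = |q − q0| · |q − q̃0|, where q̃0 = (q − q0)·conj(q0)·(q − q0)⁻¹ belongs to x0 + y0·𝕊. -/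
open Quaternion

theorem norm_factorization_off_sphere (x0 y0 : ℝ) (hy0 : 0 < y0)
    (I : ℍ[ℝ]) (hI : I ^ 2 = -1) (q0 : ℍ[ℝ]) (hq0 : q0 = (x0 : ℍ[ℝ]) + y0 • I)
    (q : ℍ[ℝ]) (hq : q ∉ {p : ℍ[ℝ] | ∃ J : ℍ[ℝ], J ^ 2 = -1 ∧ p = (x0 : ℍ[ℝ]) + y0 • J}) :
    q - q0 ≠ 0 ∧
    ∀ qt : ℍ[ℝ], qt = (q - q0) * star q0 * (q - q0)⁻¹ →
      qt ∈ {p : ℍ[ℝ] | ∃ J : ℍ[ℝ], J ^ 2 = -1 ∧ p = (x0 : ℍ[ℝ]) + y0 • J} ∧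
      ‖(q - (x0 : ℍ[ℝ])) ^ 2 + ((y0 ^ 2 : ℝ) : ℍ[ℝ])‖ = ‖q - q0‖ * ‖q - qt‖ := by
  have hd : q - q0 ≠ 0 := sub_ne_zero.mpr (fun h => hq ⟨I, hI, h ▸ hq0⟩)
  set d := q - q0 with hdef
  -- basic facts about I
  have hII : I * I = -1 := by rw [← sq]; exact hI
  have hIne : I ≠ 0 := by rintro rfl; simp at hII
  have hnI : ‖I‖ = 1 := by
    have h2 : ‖I‖ ^ 2 = 1 := by rw [← norm_pow, hI, norm_neg, norm_one]
    nlinarith [norm_nonneg I]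
  have hnsqI : normSq I = 1 := by
    rw [Quaternion.normSq_eq_norm_mul_self, hnI]; ring
  have hstarI : star I = -I := by
    have h1 : star I * I = (-I) * I := by
      rw [Quaternion.star_mul_self, hnsqI, neg_mul, hII, neg_neg]; simp
    exact mul_right_cancel₀ hIne h1
  have hre : I.re = 0 := by
    have := congrArg QuaternionAlgebra.re hstarI
    simp at this; linarith
  have hsum : I.imI ^ 2 + I.imJ ^ 2 + I.imK ^ 2 = 1 := by
    have h := hnsqI
    rw [Quaternion.normSq_def'] at h
    rw [hre] at h; nlinarith
  have hstarq0 : star q0 = (x0 : ℍ[ℝ]) - y0 • I := by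
    rw [hq0, star_add, Quaternion.star_smul, hstarI]
    simp [sub_eq_add_neg]
  refine ⟨hd, fun qt hqt => ?_⟩
  have hconj : ∀ a : ℍ[ℝ], (d * a * d⁻¹) * (d * a * d⁻¹) = d * (a * a) * d⁻¹ := by
    intro a
    have key : d⁻¹ * (d * (a * d⁻¹)) = a * d⁻¹ := by
      rw [← mul_assoc, inv_mul_cancel₀ hd, one_mul]
    simp [mul_assoc, key]
  have hJ : (d * (-I) * d⁻¹) ^ 2 = -1 := by
    rw [sq, hconj]
    rw [neg_mul_neg, hII]
    simp [mul_inv_cancel₀ hd]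
  have hqt_eq : qt = (x0 : ℍ[ℝ]) + y0 • (d * (-I) * d⁻¹) := by
    rw [hqt, hstarq0]
    rw [mul_sub, sub_mul, Quaternion.mul_coe_eq_smul]
    simp [smul_mul_assoc, mul_smul_comm, mul_inv_cancel₀ hd, mul_neg, neg_mul,
      sub_eq_add_neg, Quaternion.coe_mul_eq_smul]
    rw [← Quaternion.coe_mul_eq_smul, mul_one]
  have h1 : q0 + star q0 = (x0 : ℍ[ℝ]) + (x0 : ℍ[ℝ]) := by
    rw [hstarq0, hq0]
    abel
  have h2 : q0 * star q0 = ((x0 ^ 2 + y0 ^ 2 : ℝ) : ℍ[ℝ]) := by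
    rw [Quaternion.self_mul_star]
    congr 1
    rw [hq0, Quaternion.normSq_def']
    simp [hre]
    nlinarith [hsum]
  have hqtd : qt * d = d * star q0 := by
    rw [hqt, mul_assoc, inv_mul_cancel₀ hd, mul_one]
  have key : (q - (x0 : ℍ[ℝ])) ^ 2 + ((y0 ^ 2 : ℝ) : ℍ[ℝ]) = (q - qt) * d := by
    have e : (q - qt) * d = q * q - q * (q0 + star q0) + q0 * star q0 := by
      rw [sub_mul, hqtd, hdef]; noncomm_ring
    rw [e, h1, h2]
    have hc : ((x0 : ℍ[ℝ])) * q = q * (x0 : ℍ[ℝ]) := Quaternion.coe_commutes x0 q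
    rw [sq, sub_mul, mul_sub, mul_sub, hc]
    push_cast
    noncomm_ring
  rw [key, norm_mul, mul_comm]
  exact ⟨⟨d * (-I) * d⁻¹, hJ, hqt_eq⟩, rfl⟩
end

section
/- Let {aₙ} ⊂ ℍ with limsup |aₙ|^{1/n} = 1/R for some R > 0. Fix q0 = x0 + I·y0 with x0 ∈ ℝ, y0 > 0, I ∈ 𝕊, and define P_{2n}(q) = [(q−x0)² + y0²]ⁿ and P_{2n+1}(q) = [(q−x0)² + y0²]ⁿ·(q − q0). Then the series Σₙ Pₙ(q)·aₙ converges absolutely at every q in the open set U(x0 + y0·𝕊, R) = {q ∈ ℍ : |(q−x0)² + y0²| < R²}. -/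
open Quaternion Filter

lemma halfpow_summable (r : ℝ) (h0 : 0 ≤ r) (h1 : r < 1) :
    Summable (fun n : ℕ => r ^ (n / 2)) := by
  rcases eq_or_lt_of_le h0 with h | h
  · apply summable_of_ne_finset_zero (s := Finset.range 2)
    intro n hn
    simp only [Finset.mem_range, not_lt] at hn
    have hk : n / 2 ≠ 0 := by omega
    rw [← h, zero_pow hk]
  · set s := Real.sqrt r with hs
    have hs0 : 0 < s := Real.sqrt_pos.mpr h
    have hs1 : s < 1 := by
      rw [hs, show (1:ℝ) = Real.sqrt 1 by simp]
      exact Real.sqrt_lt_sqrt h0 h1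
    have hgeo : Summable (fun n : ℕ => s⁻¹ * s ^ n) :=
      (summable_geometric_of_lt_one hs0.le hs1).mul_left _
    refine Summable.of_nonneg_of_le (fun n => pow_nonneg h0 _) (fun n => ?_) hgeo
    have hr : r ^ (n / 2) = s ^ (2 * (n / 2)) := by
      rw [pow_mul, hs, Real.sq_sqrt h0]
    rcases Nat.eq_zero_or_pos n with hn | hn
    · subst hn
      have hinv : s * s⁻¹ = 1 := mul_inv_cancel₀ hs0.ne'
      have hinv0 : 0 ≤ s⁻¹ := inv_nonneg.mpr hs0.le
      simp only [Nat.zero_div, pow_zero, mul_one]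
      nlinarith
    · have h2 : n - 1 ≤ 2 * (n / 2) := by omega
      have hle : s ^ (2 * (n / 2)) ≤ s ^ (n - 1) :=
        pow_le_pow_of_le_one hs0.le hs1.le h2
      rw [hr]
      refine hle.trans (le_of_eq ?_)
      have hsn : s ^ n = s * s ^ (n - 1) := by
        rw [← pow_succ']
        congr 1
        omega
      rw [hsn, inv_mul_cancel_left₀ hs0.ne']

/-- The polynomials `P_{2n}(q) = [(q-x0)²+y0²]ⁿ` and `P_{2n+1}(q) = [(q-x0)²+y0²]ⁿ(q-q0)`. -/
noncomputable def sphericalPoly (x0 y0 : ℝ) (q0 : ℍ[ℝ]) (n : ℕ) (q : ℍ[ℝ]) : ℍ[ℝ] :=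
  ((q - (x0 : ℍ[ℝ])) ^ 2 + ((y0 ^ 2 : ℝ) : ℍ[ℝ])) ^ (n / 2) *
    (if n % 2 = 1 then q - q0 else 1)

theorem sphericalSeries_summable (a : ℕ → ℍ[ℝ]) (R : ℝ) (hR : 0 < R)
    (ha : limsup (fun n : ℕ => ‖a n‖ ^ (1 / (n : ℝ))) atTop = 1 / R)
    (x0 y0 : ℝ) (hy0 : 0 < y0) (I : ℍ[ℝ]) (hI : I ^ 2 = -1)
    (q0 : ℍ[ℝ]) (hq0 : q0 = (x0 : ℍ[ℝ]) + y0 • I)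
    (q : ℍ[ℝ]) (hq : ‖(q - (x0 : ℍ[ℝ])) ^ 2 + ((y0 ^ 2 : ℝ) : ℍ[ℝ])‖ < R ^ 2) :
    Summable (fun n : ℕ => ‖sphericalPoly x0 y0 q0 n q * a n‖) := by
  set S : ℍ[ℝ] := (q - (x0 : ℍ[ℝ])) ^ 2 + ((y0 ^ 2 : ℝ) : ℍ[ℝ]) with hS
  set s : ℝ := ‖S‖ with hsdef
  have hs0 : 0 ≤ s := norm_nonneg _
  set u : ℝ := (s + R ^ 2) / 2 with hu
  have hsu : s < u := by rw [hu]; linarith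
  have hu0 : 0 < u := by rw [hu]; nlinarith
  have huR : u < R ^ 2 := by rw [hu]; linarith
  have hbdd : IsBoundedUnder (· ≤ ·) atTop (fun n : ℕ => ‖a n‖ ^ (1 / (n : ℝ))) := by
    by_contra hb
    have hemp : {b : ℝ | ∀ᶠ n : ℕ in atTop, ‖a n‖ ^ (1 / (n : ℝ)) ≤ b} = ∅ := by
      rw [Set.eq_empty_iff_forall_notMem]
      intro b hbmem
      exact hb ⟨b, hbmem⟩
    rw [limsup_eq, hemp, Real.sInf_empty] at ha
    have h1R : (0 : ℝ) < 1 / R := by positivity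
    rw [← ha] at h1R
    exact lt_irrefl _ h1R
  set c : ℝ := (Real.sqrt u)⁻¹ with hc
  have hsqu : 0 < Real.sqrt u := Real.sqrt_pos.mpr hu0
  have hc0 : 0 < c := by positivity
  have hlt : limsup (fun n : ℕ => ‖a n‖ ^ (1 / (n : ℝ))) atTop < c := by
    rw [ha, hc, one_div]
    apply inv_strictAnti₀ hsqu
    rw [show R = Real.sqrt (R ^ 2) by rw [Real.sqrt_sq hR.le]]
    exact Real.sqrt_lt_sqrt hu0.le huR
  have hev : ∀ᶠ n : ℕ in atTop, ‖a n‖ ^ (1 / (n : ℝ)) < c :=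
    eventually_lt_of_limsup_lt hlt hbdd
  have hev2 : ∀ᶠ n : ℕ in atTop, ‖a n‖ ≤ c ^ n := by
    filter_upwards [hev, eventually_ge_atTop 1] with n hn hn1
    have hn0 : (0 : ℝ) < (n : ℝ) := by exact_mod_cast hn1
    have hx : (‖a n‖ ^ (1 / (n : ℝ))) ^ n = ‖a n‖ := by
      rw [← Real.rpow_natCast (‖a n‖ ^ (1 / (n : ℝ))) n, ← Real.rpow_mul (norm_nonneg _),
        one_div, inv_mul_cancel₀ hn0.ne', Real.rpow_one]
    calc ‖a n‖ = (‖a n‖ ^ (1 / (n : ℝ))) ^ n := hx.symm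
      _ ≤ c ^ n := pow_le_pow_left₀ (Real.rpow_nonneg (norm_nonneg _) _) hn.le n
  set B : ℝ := max 1 ‖q - q0‖ with hB
  have hB0 : 0 < B := lt_of_lt_of_le one_pos (le_max_left _ _)
  set ρ : ℝ := s / u with hρ
  have hρ0 : 0 ≤ ρ := div_nonneg hs0 hu0.le
  have hρ1 : ρ < 1 := (div_lt_one hu0).mpr hsu
  have hc2 : c ^ 2 = u⁻¹ := by rw [hc, inv_pow, Real.sq_sqrt hu0.le]
  have key : ∀ n : ℕ, ‖a n‖ ≤ c ^ n →
      ‖sphericalPoly x0 y0 q0 n q * a n‖ ≤ (B * max 1 c) * ρ ^ (n / 2) := by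
    intro n han
    have h1 : ‖sphericalPoly x0 y0 q0 n q * a n‖
        = s ^ (n / 2) * ‖(if n % 2 = 1 then q - q0 else 1 : ℍ[ℝ])‖ * ‖a n‖ := by
      rw [sphericalPoly, norm_mul, norm_mul, norm_pow, ← hS, ← hsdef]
    have hite : ‖(if n % 2 = 1 then q - q0 else 1 : ℍ[ℝ])‖ ≤ B := by
      split
      · exact le_max_right _ _
      · rw [norm_one]; exact le_max_left _ _
    have hcn : c ^ n = (u⁻¹) ^ (n / 2) * c ^ (n % 2) := by
      conv_lhs => rw [← Nat.div_add_mod n 2, pow_add, pow_mul, hc2]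
    have hmod : c ^ (n % 2) ≤ max 1 c := by
      rcases Nat.mod_two_eq_zero_or_one n with h | h <;> rw [h]
      · rw [pow_zero]; exact le_max_left _ _
      · rw [pow_one]; exact le_max_right _ _
    have hρpow : s ^ (n / 2) * (u⁻¹) ^ (n / 2) = ρ ^ (n / 2) := by
      rw [← mul_pow, hρ, div_eq_mul_inv]
    rw [h1]
    have step1 : s ^ (n / 2) * ‖(if n % 2 = 1 then q - q0 else 1 : ℍ[ℝ])‖ * ‖a n‖
        ≤ s ^ (n / 2) * B * c ^ n := by
      apply mul_le_mul (mul_le_mul_of_nonneg_left hite (pow_nonneg hs0 _)) han (norm_nonneg _)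
      positivity
    refine step1.trans ?_
    rw [hcn, mul_comm (s ^ (n / 2)) B, mul_assoc, ← mul_assoc (s ^ (n/2)), hρpow]
    rw [mul_assoc B]
    apply mul_le_mul_of_nonneg_left _ hB0.le
    rw [mul_comm (max 1 c)]
    exact mul_le_mul_of_nonneg_left hmod (pow_nonneg hρ0 _)
  apply summable_of_isBigO_nat (halfpow_summable ρ hρ0 hρ1)
  rw [Asymptotics.isBigO_iff]
  refine ⟨B * max 1 c, ?_⟩
  filter_upwards [hev2] with n hn
  rw [Real.norm_eq_abs, Real.norm_eq_abs, abs_of_nonneg (norm_nonneg _),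
    abs_of_nonneg (pow_nonneg hρ0 _)]
  exact key n hn
end

section
/- Let {aₙ} ⊂ ℍ with limsup |aₙ|^{1/n} = 1/R for some R > 0. Fix q0 = x0 + I·y0 with x0 ∈ ℝ, y0 > 0, I ∈ 𝕊, and define P_{2n}(q) = [(q−x0)² + y0²]ⁿ and P_{2n+1}(q) = [(q−x0)² + y0²]ⁿ·(q − q0). Then for every q ∈ ℍ with |(q−x0)² + y0²| > R², the series Σₙ Pₙ(q)·aₙ diverges (the general term does not tend to 0). -/
open Quaternion Filter Topology

/-!
Put `ρ = |(q-x0)² + y0²|^{1/2} > R`. Since `q0` is a root of `(q-x0)² + y0²`, the point `q` is not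
`q0`, so `|Pₙ(q)| ≥ m ρⁿ` for some `m > 0`, in both parities of `n`. If `Pₙ(q) aₙ → 0`, then
eventually `|aₙ| ρⁿ ≤ 1`, whence `limsup |aₙ|^{1/n} ≤ 1/ρ < 1/R`.
-/

theorem limsup_rpow_one_div_le_of_eventually_mul_pow_le_one {u : ℕ → ℝ} (hu : ∀ n, 0 ≤ u n)
    {ρ : ℝ} (hρ : 0 < ρ) (h : ∀ᶠ n in atTop, u n * ρ ^ n ≤ 1) :
    limsup (fun n : ℕ => u n ^ (1 / (n : ℝ))) atTop ≤ 1 / ρ := by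
  refine limsup_le_of_le (isCoboundedUnder_le_of_le atTop fun n => Real.rpow_nonneg (hu n) _) ?_
  filter_upwards [h, eventually_ge_atTop 1] with n hn hn1
  have hu_le : u n ≤ (1 / ρ) ^ n := by rwa [div_pow, one_pow, le_div_iff₀ (by positivity)]
  calc u n ^ (1 / (n : ℝ)) ≤ ((1 / ρ) ^ n) ^ (1 / (n : ℝ)) :=
        Real.rpow_le_rpow (hu n) hu_le (by positivity)
    _ = 1 / ρ := by
      rw [one_div (n : ℝ), Real.pow_rpow_inv_natCast (by positivity) (by omega)]

theorem eventually_norm_mul_pow_le_one_of_tendsto_mul {α : Type*} [NormedDivisionRing α]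
    {b a : ℕ → α} {m ρ : ℝ} (hm : 0 < m) (hb : ∀ n, m * ρ ^ n ≤ ‖b n‖)
    (h : Tendsto (fun n => b n * a n) atTop (𝓝 0)) :
    ∀ᶠ n in atTop, ‖a n‖ * ρ ^ n ≤ 1 := by
  have h_norm : Tendsto (fun n => ‖b n * a n‖) atTop (𝓝 0) := by simpa using h.norm
  filter_upwards [h_norm.eventually_lt_const hm] with n hn
  rw [norm_mul] at hn
  have : m * (‖a n‖ * ρ ^ n) ≤ m * 1 := by
    nlinarith [hb n, norm_nonneg (a n)]
  exact le_of_mul_le_mul_left this hm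

theorem min_one_div_mul_pow_le {s c : ℝ} (hs : 0 < s) (n : ℕ) :
    min 1 (c / s) * s ^ n ≤ (s ^ 2) ^ (n / 2) * (if n % 2 = 1 then c else 1) := by
  rw [← pow_mul]
  split_ifs with hn
  · obtain ⟨k, rfl⟩ : ∃ k, n = 2 * k + 1 := ⟨n / 2, by omega⟩
    rw [show (2 * k + 1) / 2 = k by omega]
    calc min 1 (c / s) * s ^ (2 * k + 1) ≤ c / s * s ^ (2 * k + 1) :=
          mul_le_mul_of_nonneg_right (min_le_right _ _) (by positivity)
      _ = s ^ (2 * k) * c := by rw [pow_succ]; field_simp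
  · have : 2 * (n / 2) = n := by omega
    rw [this, mul_one]
    exact mul_le_of_le_one_left (by positivity) (min_le_left _ _)

theorem Quaternion.smul_sq_add_coe_sq_eq_zero {I : ℍ[ℝ]} (hI : I ^ 2 = -1) (y : ℝ) :
    (y • I) ^ 2 + ((y ^ 2 : ℝ) : ℍ[ℝ]) = 0 := by
  rw [smul_pow, hI]
  ext <;> simp [-Quaternion.coe_pow]

theorem norm_sphericalPoly (x0 y0 : ℝ) (q0 : ℍ[ℝ]) (n : ℕ) (q : ℍ[ℝ]) :
    ‖sphericalPoly x0 y0 q0 n q‖ =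
      ‖(q - (x0 : ℍ[ℝ])) ^ 2 + ((y0 ^ 2 : ℝ) : ℍ[ℝ])‖ ^ (n / 2) *
        (if n % 2 = 1 then ‖q - q0‖ else 1) := by
  rw [sphericalPoly, norm_mul, norm_pow, apply_ite norm, norm_one]

theorem sphericalSeries_diverges_general (a : ℕ → ℍ[ℝ]) (R : ℝ) (hR : 0 < R)
    (ha : limsup (fun n : ℕ => ‖a n‖ ^ (1 / (n : ℝ))) atTop = 1 / R)
    (x0 y0 : ℝ) (I : ℍ[ℝ]) (hI : I ^ 2 = -1)
    (q0 : ℍ[ℝ]) (hq0 : q0 = (x0 : ℍ[ℝ]) + y0 • I)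
    (q : ℍ[ℝ]) (hq : R ^ 2 < ‖(q - (x0 : ℍ[ℝ])) ^ 2 + ((y0 ^ 2 : ℝ) : ℍ[ℝ])‖) :
    ¬ Tendsto (fun n : ℕ => sphericalPoly x0 y0 q0 n q * a n) atTop (𝓝 0) := by
  intro h
  have hq_ne : q ≠ q0 := by
    rintro rfl
    rw [hq0, add_sub_cancel_left, Quaternion.smul_sq_add_coe_sq_eq_zero hI, norm_zero] at hq
    exact (sq_nonneg R).not_gt hq
  set L := ‖(q - (x0 : ℍ[ℝ])) ^ 2 + ((y0 ^ 2 : ℝ) : ℍ[ℝ])‖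
  have hρ : R < √L := Real.lt_sqrt hR.le |>.mpr hq
  have hρ_pos : 0 < √L := hR.trans hρ
  have hm : 0 < min 1 (‖q - q0‖ / √L) :=
    lt_min one_pos (div_pos (norm_pos_iff.mpr (sub_ne_zero.mpr hq_ne)) hρ_pos)
  have h_growth : ∀ n, min 1 (‖q - q0‖ / √L) * √L ^ n ≤ ‖sphericalPoly x0 y0 q0 n q‖ := by
    intro n
    have := min_one_div_mul_pow_le (c := ‖q - q0‖) hρ_pos n
    rwa [Real.sq_sqrt (norm_nonneg _), ← norm_sphericalPoly] at this
  have h_limsup := limsup_rpow_one_div_le_of_eventually_mul_pow_le_one (fun n => norm_nonneg (a n))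
    hρ_pos (eventually_norm_mul_pow_le_one_of_tendsto_mul hm h_growth h)
  rw [ha] at h_limsup
  exact (one_div_lt_one_div_of_lt hR hρ).not_ge h_limsup

theorem sphericalSeries_diverges (a : ℕ → ℍ[ℝ]) (R : ℝ) (hR : 0 < R)
    (ha : limsup (fun n : ℕ => ‖a n‖ ^ (1 / (n : ℝ))) atTop = 1 / R)
    (x0 y0 : ℝ) (hy0 : 0 < y0) (I : ℍ[ℝ]) (hI : I ^ 2 = -1)
    (q0 : ℍ[ℝ]) (hq0 : q0 = (x0 : ℍ[ℝ]) + y0 • I)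
    (q : ℍ[ℝ]) (hq : R ^ 2 < ‖(q - (x0 : ℍ[ℝ])) ^ 2 + ((y0 ^ 2 : ℝ) : ℍ[ℝ])‖) :
    ¬ Tendsto (fun n : ℕ => sphericalPoly x0 y0 q0 n q * a n) atTop (𝓝 0) :=
  sphericalSeries_diverges_general a R hR ha x0 y0 I hI q0 hq0 q hq
end

section
/- Let x0 ∈ ℝ, y0 > 0, r > R > 0, and q0 = x0 + I·y0 for I ∈ 𝕊. Let {aₙ} ⊂ ℍ satisfy limsup |aₙ|^{1/n} = 1/R. Define P_{2n}(q) = [(q−x0)² + y0²]ⁿ and P_{2n+1}(q) = [(q−x0)² + y0²]ⁿ·(q−q0). If q ∈ ℍ satisfies |(q−x0)² + y0²| = r² with r > R, then the terms satisfy |P_{2n}(q)·a_{2n}| ≥ r^{2n}·|a_{2n}| and |P_{2n+1}(q)·a_{2n+1}| ≥ r^{2n}·(√(r² + y0²) − y0)·|a_{2n+1}| for all n. -/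
open Quaternion Filter

theorem sphericalSeries_term_lower_bounds (x0 y0 r R : ℝ) (hy0 : 0 < y0)
    (hR : 0 < R) (hrR : R < r) (I : ℍ[ℝ]) (hI : I ^ 2 = -1)
    (q0 : ℍ[ℝ]) (hq0 : q0 = (x0 : ℍ[ℝ]) + y0 • I)
    (a : ℕ → ℍ[ℝ])
    (ha : limsup (fun n : ℕ => ‖a n‖ ^ (1 / (n : ℝ))) atTop = 1 / R)
    (q : ℍ[ℝ]) (hq : ‖(q - (x0 : ℍ[ℝ])) ^ 2 + ((y0 ^ 2 : ℝ) : ℍ[ℝ])‖ = r ^ 2) :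
    ∀ n : ℕ,
      r ^ (2 * n) * ‖a (2 * n)‖ ≤ ‖sphericalPoly x0 y0 q0 (2 * n) q * a (2 * n)‖ ∧
      r ^ (2 * n) * (Real.sqrt (r ^ 2 + y0 ^ 2) - y0) * ‖a (2 * n + 1)‖ ≤
        ‖sphericalPoly x0 y0 q0 (2 * n + 1) q * a (2 * n + 1)‖ := by
  have hr : (0 : ℝ) < r := hR.trans hrR
  set w : ℍ[ℝ] := (q - (x0 : ℍ[ℝ])) ^ 2 + ((y0 ^ 2 : ℝ) : ℍ[ℝ]) with hw
  have hnI : ‖I‖ = 1 := by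
    have h2 : ‖I‖ ^ 2 = 1 := by
      rw [← norm_pow, hI, norm_neg, norm_one]
    nlinarith [norm_nonneg I]
  set d : ℝ := ‖q - q0‖ with hd
  have hdx : ‖q - (x0 : ℍ[ℝ])‖ ≤ d + y0 := by
    have heq : q - (x0 : ℍ[ℝ]) = (q - q0) + (q0 - (x0 : ℍ[ℝ])) := by abel
    rw [heq]
    have h1 : ‖q0 - (x0 : ℍ[ℝ])‖ = y0 := by
      rw [hq0]
      simp [norm_smul, abs_of_pos hy0, hnI]
    calc ‖(q - q0) + (q0 - (x0 : ℍ[ℝ]))‖ ≤ ‖q - q0‖ + ‖q0 - (x0 : ℍ[ℝ])‖ := norm_add_le _ _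
      _ = d + y0 := by rw [h1]
  have hid : w = (q - (x0 : ℍ[ℝ])) * (q - q0) + y0 • ((q - q0) * I) := by
    rw [hq0, hw]
    have hII : I * I = -1 := by rw [← sq, hI]
    have hcoe : ((y0 ^ 2 : ℝ) : ℍ[ℝ]) = (y0 * y0) • (1 : ℍ[ℝ]) := by
      push_cast; simp [Algebra.smul_def, sq]
    rw [hcoe, sq]
    simp only [mul_sub, sub_mul, mul_add, add_mul, smul_mul_assoc, mul_smul_comm, smul_smul,
      hII, smul_add, smul_sub, smul_neg]
    abel
  have hkey : Real.sqrt (r ^ 2 + y0 ^ 2) - y0 ≤ d := by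
    have hbound : r ^ 2 ≤ d ^ 2 + 2 * y0 * d := by
      have h1 : ‖w‖ ≤ ‖q - (x0 : ℍ[ℝ])‖ * d + y0 * d := by
        rw [hid]
        calc ‖(q - (x0 : ℍ[ℝ])) * (q - q0) + y0 • ((q - q0) * I)‖
            ≤ ‖(q - (x0 : ℍ[ℝ])) * (q - q0)‖ + ‖y0 • ((q - q0) * I)‖ := norm_add_le _ _
          _ = ‖q - (x0 : ℍ[ℝ])‖ * d + y0 * d := by
              rw [norm_smul, norm_mul, norm_mul, hnI, mul_one, Real.norm_eq_abs,
                abs_of_pos hy0]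
      have hd0 : (0 : ℝ) ≤ d := norm_nonneg _
      nlinarith [hq, hdx, norm_nonneg (q - (x0 : ℍ[ℝ]))]
    have hsq : Real.sqrt (r ^ 2 + y0 ^ 2) ≤ d + y0 := by
      have hd0 : (0 : ℝ) ≤ d := norm_nonneg _
      have h2 : r ^ 2 + y0 ^ 2 ≤ (d + y0) ^ 2 := by nlinarith
      calc Real.sqrt (r ^ 2 + y0 ^ 2) ≤ Real.sqrt ((d + y0) ^ 2) := Real.sqrt_le_sqrt h2
        _ = d + y0 := by rw [Real.sqrt_sq (by linarith)]
    linarith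
  have hnw : ‖w‖ = r ^ 2 := hq
  intro n
  have hpow : ∀ m : ℕ, ‖w ^ m‖ = r ^ (2 * m) := by
    intro m
    rw [norm_pow, hnw, ← pow_mul]
  constructor
  · have he : sphericalPoly x0 y0 q0 (2 * n) q = w ^ n := by
      simp [sphericalPoly, Nat.mul_div_cancel_left, Nat.mul_mod_right, hw]
    rw [he, norm_mul, hpow]
  · have ho : sphericalPoly x0 y0 q0 (2 * n + 1) q = w ^ n * (q - q0) := by
      have h1 : (2 * n + 1) / 2 = n := by omega
      have h2 : (2 * n + 1) % 2 = 1 := by omega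
      simp [sphericalPoly, h1, h2, hw]
    rw [ho, mul_assoc, norm_mul, norm_mul, hpow, ← hd, ← mul_assoc]
    have hr2n : (0 : ℝ) ≤ r ^ (2 * n) := by positivity
    exact mul_le_mul_of_nonneg_right
      (mul_le_mul_of_nonneg_left hkey hr2n) (norm_nonneg _)
end
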